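/- If the three processes X = (X_n)_{n≥1}, Y = (Y_n)_{n≥1} and T = (T_n)_{n≥1} are mutually independent (i.e. the σ-fields σ(X_n, n ≥ 1), σ(Y_n, n ≥ 1), σ(T_n, n ≥ 1) are mutually independent), then condition C1 holds: for every n ≥ 1, the σ-fields H_n and G_∞ are conditionally independent given G_n. -/

import Mathlib

open MeasureTheory ProbabilityTheory Filter Set

noncomputable section

variable {Ω : Type*}

/-- `Q n = 1` if the `n`-th moves agree, `0` if they are opposite. -/
def Qproc (ξ η : ℕ → Ω → ℝ) (n : ℕ) (ω : Ω) : ℕ :=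
  if ξ n ω = η n ω then 1 else 0

/-- `T n = ∑_{k=1}^n Q k`, the number of common movements up to step `n`. -/
def Tproc (ξ η : ℕ → Ω → ℝ) (n : ℕ) (ω : Ω) : ℕ :=
  ∑ k ∈ Finset.Icc 1 n, Qproc ξ η k ω

/-- `S n = n - T n`, the number of counter movements up to step `n`. -/
def Sproc (ξ η : ℕ → Ω → ℝ) (n : ℕ) (ω : Ω) : ℕ :=
  n - Tproc ξ η n ω

/-- `α n = inf {k ≥ 1 : T k = n}`, with `inf ∅ = ⊤`, valued in `ℕ∞`. -/
def alphaProc (ξ η : ℕ → Ω → ℝ) (n : ℕ) (ω : Ω) : ℕ∞ :=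
  ⨅ (k : ℕ) (_ : 1 ≤ k ∧ Tproc ξ η k ω = n), (k : ℕ∞)

/-- `β n = inf {k ≥ 1 : S k = n}`, with `inf ∅ = ⊤`, valued in `ℕ∞`. -/
def betaProc (ξ η : ℕ → Ω → ℝ) (n : ℕ) (ω : Ω) : ℕ∞ :=
  ⨅ (k : ℕ) (_ : 1 ≤ k ∧ Sproc ξ η k ω = n), (k : ℕ∞)

/-- `ξ̃_{α n}`: equal to `ξ_i` on `{α n = i}` (`i < ∞`) and to `ζ n` on `{α n = ∞}`. -/
def xiAlpha (ξ η ζ : ℕ → Ω → ℝ) (n : ℕ) (ω : Ω) : ℝ :=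
  if alphaProc ξ η n ω = ⊤ then ζ n ω else ξ (alphaProc ξ η n ω).toNat ω

/-- `ξ̃_{β m}`: equal to `ξ_i` on `{β m = i}` (`i < ∞`) and to `ψ m` on `{β m = ∞}`. -/
def xiBeta (ξ η ψ : ℕ → Ω → ℝ) (m : ℕ) (ω : Ω) : ℝ :=
  if betaProc ξ η m ω = ⊤ then ψ m ω else ξ (betaProc ξ η m ω).toNat ω

/-- The common-movement walk `X n = ∑_{i=1}^n ξ̃_{α i}`. -/
def Xproc (ξ η ζ : ℕ → Ω → ℝ) (n : ℕ) (ω : Ω) : ℝ :=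
  ∑ i ∈ Finset.Icc 1 n, xiAlpha ξ η ζ i ω

/-- The counter-movement walk `Y n = ∑_{i=1}^n ξ̃_{β i}`. -/
def Yproc (ξ η ψ : ℕ → Ω → ℝ) (n : ℕ) (ω : Ω) : ℝ :=
  ∑ i ∈ Finset.Icc 1 n, xiBeta ξ η ψ i ω

/-- `G n = σ(T k, 1 ≤ k ≤ n)`. -/
def Gfield (ξ η : ℕ → Ω → ℝ) (n : ℕ) : MeasurableSpace Ω :=
  ⨆ k ∈ Finset.Icc 1 n, MeasurableSpace.comap (fun ω => Tproc ξ η k ω) inferInstance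

/-- `G ∞ = σ(T k, k ≥ 1)`. -/
def GfieldInf (ξ η : ℕ → Ω → ℝ) : MeasurableSpace Ω :=
  ⨆ k ∈ {k : ℕ | 1 ≤ k}, MeasurableSpace.comap (fun ω => Tproc ξ η k ω) inferInstance

/-- `H n = σ(ξ k, η k, 1 ≤ k ≤ n)`. -/
def Hfield (ξ η : ℕ → Ω → ℝ) (n : ℕ) : MeasurableSpace Ω :=
  ⨆ k ∈ Finset.Icc 1 n,
    (MeasurableSpace.comap (ξ k) inferInstance ⊔ MeasurableSpace.comap (η k) inferInstance)

/-- `mA` and `mB` are conditionally independent given `m` (under `P`):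
`P(A ∩ B | m) = P(A | m) * P(B | m)` a.s. for all `A ∈ mA`, `B ∈ mB`. -/
def CondIndepGiven [MeasurableSpace Ω] (P : Measure Ω) (m mA mB : MeasurableSpace Ω) : Prop :=
  ∀ A B : Set Ω, MeasurableSet[mA] A → MeasurableSet[mB] B →
    (P[(A ∩ B).indicator (fun _ => (1 : ℝ)) | m]) =ᵐ[P]
      fun ω => (P[A.indicator (fun _ => (1 : ℝ)) | m]) ω * (P[B.indicator (fun _ => (1 : ℝ)) | m]) ω

/-!
Write `M = σ(X) ∨ σ(Y)`, which is independent of `G_∞ ⊇ G_n`. Then `M ∨ G_n` and `G_∞` are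
conditionally independent given `G_n`: for `B ∈ G_∞` one has `E[1_B | M ∨ G_n] = E[1_B | G_n]`,
since both sides have the same integral over every `S ∩ G` with `S ∈ M`, `G ∈ G_n` (a π-system),
and the product formula follows by the tower property. It remains to see `H_n ≤ M ∨ G_n`. If
`Q_k = 1`, step `k` is the `T_k`-th common movement, so `α_{T_k} = k` and
`ξ_k = X_{T_k} - X_{T_k - 1}`; otherwise `β_{S_k} = k` and `ξ_k = Y_{S_k} - Y_{S_k - 1}`.
Finally `η_k = ±ξ_k` according to `Q_k`.
-/

theorem sup_eq_generateFrom_inter (m₁ m₂ : MeasurableSpace Ω) :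
    m₁ ⊔ m₂ = MeasurableSpace.generateFrom
      (image2 (· ∩ ·) {s | MeasurableSet[m₁] s} {s | MeasurableSet[m₂] s}) := by
  refine le_antisymm (sup_le ?_ ?_) (MeasurableSpace.generateFrom_le ?_)
  · exact fun s hs ↦ MeasurableSpace.measurableSet_generateFrom ⟨s, hs, univ, .univ, inter_univ s⟩
  · exact fun s hs ↦ MeasurableSpace.measurableSet_generateFrom ⟨univ, .univ, s, hs, univ_inter s⟩
  · rintro _ ⟨s₁, hs₁, s₂, hs₂, rfl⟩
    exact (le_sup_left (b := m₂) _ hs₁).inter (le_sup_right (a := m₁) _ hs₂)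

theorem isPiSystem_image2_inter (m₁ m₂ : MeasurableSpace Ω) :
    IsPiSystem (image2 (· ∩ ·) {s | MeasurableSet[m₁] s} {s | MeasurableSet[m₂] s}) := by
  rintro _ ⟨s₁, hs₁, t₁, ht₁, rfl⟩ _ ⟨s₂, hs₂, t₂, ht₂, rfl⟩ -
  exact ⟨s₁ ∩ s₂, hs₁.inter hs₂, t₁ ∩ t₂, ht₁.inter ht₂, inter_inter_inter_comm _ _ _ _⟩

section CondExp

variable {mS mT m' mΩ : MeasurableSpace Ω} {μ : Measure Ω} [IsFiniteMeasure μ] {B : Set Ω}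

theorem setLIntegral_ofReal_condExp_indicator (hm' : m' ≤ mΩ) (hB : MeasurableSet B)
    {G : Set Ω} (hG : MeasurableSet[m'] G) :
    ∫⁻ ω in G, ENNReal.ofReal ((μ⟦B | m'⟧) ω) ∂μ = μ (G ∩ B) := by
  rw [← ofReal_integral_eq_lintegral_ofReal integrable_condExp.integrableOn
      (ae_restrict_of_ae (condExp_nonneg (.of_forall (indicator_nonneg fun _ _ ↦ zero_le_one)))),
    setIntegral_condExp hm' ((integrable_const 1).indicator hB) hG,
    setIntegral_indicator hB, setIntegral_const, smul_eq_mul, mul_one,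
    ofReal_measureReal (measure_ne_top _ _)]

theorem setLIntegral_ofReal_condExp_indicator_sup_of_indep (hS : mS ≤ mΩ) (hT : mT ≤ mΩ)
    (hm' : m' ≤ mT) (hST : Indep mS mT μ) (hB : MeasurableSet[mT] B) {C : Set Ω}
    (hC : MeasurableSet[mS ⊔ m'] C) :
    ∫⁻ ω in C, ENNReal.ofReal ((μ⟦B | m'⟧) ω) ∂μ = μ (C ∩ B) := by
  set f : Ω → ENNReal := fun ω ↦ ENNReal.ofReal ((μ⟦B | m'⟧) ω)
  have hsup : mS ⊔ m' ≤ mΩ := sup_le hS (hm'.trans hT)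
  have hf : Measurable[mT] f :=
    (stronglyMeasurable_condExp.measurable.ennreal_ofReal).mono hm' le_rfl
  rw [← withDensity_apply f (hsup _ hC), ← Measure.restrict_apply' (hT _ hB)]
  refine (ext_on_measurableSpace_of_generate_finite mΩ _ ?_ hsup (sup_eq_generateFrom_inter mS m')
    (isPiSystem_image2_inter mS m') ?_ hC).symm
  · rintro _ ⟨S, hS', G, hG, rfl⟩
    have hGB : MeasurableSet[mT] (G ∩ B) := (hm' _ hG).inter hB
    calc μ.restrict B (S ∩ G) = μ S * μ (G ∩ B) := by
          rw [Measure.restrict_apply' (hT _ hB), inter_assoc,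
            (Indep_iff _ _ _).mp hST S _ hS' hGB]
      _ = (∫⁻ ω, S.indicator 1 ω ∂μ) * ∫⁻ ω, G.indicator f ω ∂μ := by
          rw [lintegral_indicator_one (hS _ hS'), lintegral_indicator (hm'.trans hT _ hG),
            setLIntegral_ofReal_condExp_indicator (hm'.trans hT) (hT _ hB) hG]
      _ = ∫⁻ ω, S.indicator 1 ω * G.indicator f ω ∂μ :=
          (lintegral_mul_eq_lintegral_mul_lintegral_of_independent_measurableSpace hS hT hST
            (measurable_const.indicator hS') (hf.indicator (hm' _ hG))).symm
      _ = μ.withDensity f (S ∩ G) := by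
          rw [withDensity_apply f ((hS _ hS').inter (hm'.trans hT _ hG)),
            ← lintegral_indicator ((hS _ hS').inter (hm'.trans hT _ hG))]
          congr 1 with ω
          by_cases hωS : ω ∈ S <;> by_cases hωG : ω ∈ G <;> simp [hωS, hωG]
  · rw [withDensity_apply f .univ, Measure.restrict_apply' (hT _ hB),
      setLIntegral_ofReal_condExp_indicator (hm'.trans hT) (hT _ hB) .univ]

theorem condExp_indicator_sup_ae_eq_of_indep (hS : mS ≤ mΩ) (hT : mT ≤ mΩ) (hm' : m' ≤ mT)
    (hST : Indep mS mT μ) (hB : MeasurableSet[mT] B) :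
    μ⟦B | mS ⊔ m'⟧ =ᵐ[μ] μ⟦B | m'⟧ := by
  have hsup : mS ⊔ m' ≤ mΩ := sup_le hS (hm'.trans hT)
  have hnonneg : 0 ≤ᵐ[μ] μ⟦B | m'⟧ :=
    condExp_nonneg (.of_forall (indicator_nonneg fun _ _ ↦ zero_le_one))
  refine (ae_eq_condExp_of_forall_setIntegral_eq hsup ((integrable_const 1).indicator (hT _ hB))
    (fun _ _ _ ↦ integrable_condExp.integrableOn) (fun C hC _ ↦ ?_)
    (stronglyMeasurable_condExp.mono (le_sup_right : m' ≤ mS ⊔ m')).aestronglyMeasurable).symm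
  rw [integral_eq_lintegral_of_nonneg_ae (ae_restrict_of_ae hnonneg)
      (stronglyMeasurable_condExp.mono (hm'.trans hT)).aestronglyMeasurable.restrict,
    setLIntegral_ofReal_condExp_indicator_sup_of_indep hS hT hm' hST hB hC,
    setIntegral_indicator (hT _ hB), setIntegral_const, smul_eq_mul, mul_one, measureReal_def]

theorem condIndepGiven_sup_of_indep (hS : mS ≤ mΩ) (hT : mT ≤ mΩ) (hm' : m' ≤ mT)
    (hST : Indep mS mT μ) : CondIndepGiven μ m' (mS ⊔ m') mT := by
  intro A B hA hB
  have hsup : mS ⊔ m' ≤ mΩ := sup_le hS (hm'.trans hT)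
  have hAm : MeasurableSet A := hsup _ hA
  have hAint : Integrable (A.indicator fun _ ↦ (1 : ℝ)) μ := (integrable_const 1).indicator hAm
  have hBint : Integrable (B.indicator fun _ ↦ (1 : ℝ)) μ :=
    (integrable_const 1).indicator (hT _ hB)
  have hinter : (A ∩ B).indicator (fun _ ↦ (1 : ℝ)) =
      A.indicator (fun _ ↦ 1) * B.indicator (fun _ ↦ 1) := inter_indicator_one
  have hpull_sup : μ⟦A ∩ B | mS ⊔ m'⟧ =ᵐ[μ] A.indicator (fun _ ↦ 1) * μ⟦B | m'⟧ := by
    rw [hinter]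
    refine (condExp_mul_of_stronglyMeasurable_left
      (stronglyMeasurable_const.indicator hA) (hinter ▸ (integrable_const 1).indicator
        (hAm.inter (hT _ hB))) hBint).trans ?_
    exact EventuallyEq.rfl.mul (condExp_indicator_sup_ae_eq_of_indep hS hT hm' hST hB)
  have hAg : A.indicator (fun _ ↦ 1) * μ⟦B | m'⟧ = A.indicator (μ⟦B | m'⟧) := by
    ext ω
    by_cases hω : ω ∈ A <;> simp [hω]
  have hpull : μ[A.indicator (fun _ ↦ 1) * μ⟦B | m'⟧ | m'] =ᵐ[μ] μ⟦B | m'⟧ * μ⟦A | m'⟧ := by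
    rw [mul_comm]
    exact condExp_mul_of_stronglyMeasurable_left stronglyMeasurable_condExp
      (by rw [mul_comm, hAg]; exact integrable_condExp.indicator hAm) hAint
  calc μ⟦A ∩ B | m'⟧ =ᵐ[μ] μ[μ⟦A ∩ B | mS ⊔ m'⟧ | m'] :=
        (condExp_condExp_of_le le_sup_right hsup).symm
    _ =ᵐ[μ] μ[A.indicator (fun _ ↦ 1) * μ⟦B | m'⟧ | m'] := condExp_congr_ae hpull_sup
    _ =ᵐ[μ] μ⟦B | m'⟧ * μ⟦A | m'⟧ := hpull
    _ = fun ω ↦ (μ⟦A | m'⟧) ω * (μ⟦B | m'⟧) ω := mul_comm _ _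

end CondExp

theorem CondIndepGiven.mono_left {m mA mA' mB : MeasurableSpace Ω} [MeasurableSpace Ω]
    {μ : Measure Ω} (h : CondIndepGiven μ m mA mB) (hle : mA' ≤ mA) :
    CondIndepGiven μ m mA' mB :=
  fun A B hA hB ↦ h A B (hle _ hA) hB

theorem ProbabilityTheory.iIndep.indep_sup_of_fin_three {mΩ : MeasurableSpace Ω} {μ : Measure Ω}
    {m₁ m₂ m₃ : MeasurableSpace Ω} (h₁ : m₁ ≤ mΩ) (h₂ : m₂ ≤ mΩ) (h₃ : m₃ ≤ mΩ)
    (h : iIndep ![m₁, m₂, m₃] μ) : Indep (m₁ ⊔ m₂) m₃ μ := by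
  have hle : ∀ i, ![m₁, m₂, m₃] i ≤ mΩ := fun i ↦ by fin_cases i <;> assumption
  simpa [iSup_insert] using
    indep_iSup_of_disjoint hle h (S := {0, 1}) (T := {2}) (by simp [Fin.ext_iff])

instance ENat.borelSpace : BorelSpace ℕ∞ := ⟨borel_eq_top_of_countable.symm⟩

theorem measurable_of_countable_index {ι β : Type*} {mΩ : MeasurableSpace Ω} [MeasurableSpace ι]
    [Countable ι] [MeasurableSingletonClass ι] [MeasurableSpace β] {F : ι → Ω → β}
    (hF : ∀ i, Measurable (F i)) {g : Ω → ι} (hg : Measurable g) :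
    Measurable fun ω ↦ F (g ω) ω :=
  (measurable_from_prod_countable_left (f := fun p : Ω × ι ↦ F p.2 p.1) hF).comp
    (measurable_id.prodMk hg)

abbrev processSigma {β : Type*} [MeasurableSpace β] (Z : ℕ → Ω → β) : MeasurableSpace Ω :=
  ⨆ n ∈ {n : ℕ | 1 ≤ n}, MeasurableSpace.comap (Z n) inferInstance

section ProcessSigma

variable {β : Type*} [MeasurableSpace β] {Z : ℕ → Ω → β}

theorem measurable_processSigma {k : ℕ} (hk : 1 ≤ k) : Measurable[processSigma Z] (Z k) :=
  measurable_iff_comap_le.mpr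
    (le_iSup₂ (f := fun n (_ : n ∈ {n : ℕ | 1 ≤ n}) ↦ MeasurableSpace.comap (Z n) _) k hk)

theorem measurable_processSigma_of_eq_const {c : β} (h₀ : Z 0 = fun _ ↦ c) (k : ℕ) :
    Measurable[processSigma Z] (Z k) := by
  rcases k.eq_zero_or_pos with rfl | hk
  · rw [h₀]
    exact measurable_const
  · exact measurable_processSigma hk

theorem processSigma_le {mΩ : MeasurableSpace Ω} (hZ : ∀ k, 1 ≤ k → Measurable (Z k)) :
    processSigma Z ≤ mΩ :=
  iSup₂_le fun k hk ↦ (hZ k hk).comap_le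

end ProcessSigma

def firstHit (Z : ℕ → Ω → ℕ) (n : ℕ) (ω : Ω) : ℕ∞ :=
  ⨅ (k : ℕ) (_ : 1 ≤ k ∧ Z k ω = n), (k : ℕ∞)

section FirstHit

variable {Z : ℕ → Ω → ℕ}

theorem one_le_firstHit (n : ℕ) (ω : Ω) : 1 ≤ firstHit Z n ω :=
  le_iInf₂ fun _ hk ↦ by exact_mod_cast hk.1

theorem firstHit_eq_succ_of_lt {m : ℕ} {ω : Ω} (hZ : Monotone (Z · ω))
    (h : Z m ω < Z (m + 1) ω) : firstHit Z (Z (m + 1) ω) ω = (m + 1 : ℕ) := by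
  refine le_antisymm (iInf₂_le (m + 1) ⟨m.succ_pos, rfl⟩)
    (le_iInf₂ fun j hj ↦ Nat.cast_le.mpr (not_lt.mp fun hlt ↦ ?_))
  have : Z j ω ≤ Z m ω := hZ (Nat.lt_succ_iff.mp hlt)
  omega

theorem measurable_firstHit {mΩ : MeasurableSpace Ω} (hZ : ∀ k, 1 ≤ k → Measurable (Z k))
    (n : ℕ) : Measurable (firstHit Z n) := by
  classical
  refine Measurable.iInf fun k ↦ ?_
  by_cases hk : 1 ≤ k
  · simp only [hk, true_and, iInf_eq_if]
    exact Measurable.ite (hZ k hk (measurableSet_singleton n)) measurable_const measurable_const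
  · simp [hk]

end FirstHit

theorem measurable_ite_top_toNat {β : Type*} {mΩ : MeasurableSpace Ω} [MeasurableSpace β]
    {τ : Ω → ℕ∞} (hτ : Measurable τ) (hτ₁ : ∀ ω, 1 ≤ τ ω) {ξ : ℕ → Ω → β}
    (hξ : ∀ k, 1 ≤ k → Measurable (ξ k)) {ζ : Ω → β} (hζ : Measurable ζ) :
    Measurable fun ω ↦ if τ ω = ⊤ then ζ ω else ξ (τ ω).toNat ω := by
  have h : (fun ω ↦ if τ ω = ⊤ then ζ ω else ξ (τ ω).toNat ω) =
      fun ω ↦ (fun v : ℕ∞ ↦ if v = ⊤ then ζ else ξ (max 1 v.toNat)) (τ ω) ω := by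
    ext ω
    by_cases hω : τ ω = ⊤
    · simp [hω]
    · -- `ξ 0` need not be measurable; `τ ≥ 1` lets us avoid it
      have : 1 ≤ (τ ω).toNat := by
        lift τ ω to ℕ using hω with k hk
        exact_mod_cast hk ▸ hτ₁ ω
      simp [hω, max_eq_right this]
  rw [h]
  refine measurable_of_countable_index
    (F := fun v : ℕ∞ ↦ if v = ⊤ then ζ else ξ (max 1 v.toNat)) (fun v ↦ ?_) hτ
  split_ifs
  · exact hζ
  · exact hξ _ (le_max_left _ _)

section Processes

variable (ξ η ζ ψ : ℕ → Ω → ℝ)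

theorem Qproc_le_one (k : ℕ) (ω : Ω) : Qproc ξ η k ω ≤ 1 := by
  unfold Qproc; split <;> simp

theorem Tproc_zero (ω : Ω) : Tproc ξ η 0 ω = 0 := by
  simp [Tproc]

theorem Tproc_succ (m : ℕ) (ω : Ω) :
    Tproc ξ η (m + 1) ω = Tproc ξ η m ω + Qproc ξ η (m + 1) ω :=
  Finset.sum_Icc_succ_top (Nat.le_add_left 1 m) _

theorem Tproc_le_self (k : ℕ) (ω : Ω) : Tproc ξ η k ω ≤ k := by
  induction k with
  | zero => simp [Tproc_zero]
  | succ m ih =>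
    have := Qproc_le_one ξ η (m + 1) ω
    rw [Tproc_succ]
    omega

theorem monotone_Tproc (ω : Ω) : Monotone (Tproc ξ η · ω) :=
  monotone_nat_of_le_succ fun m ↦ by rw [Tproc_succ]; omega

theorem monotone_Sproc (ω : Ω) : Monotone (Sproc ξ η · ω) :=
  monotone_nat_of_le_succ fun m ↦ by
    have := Tproc_le_self ξ η m ω
    have := Qproc_le_one ξ η (m + 1) ω
    simp only [Sproc, Tproc_succ]
    omega

theorem Xproc_zero : Xproc ξ η ζ 0 = fun _ ↦ 0 := by
  ext ω; simp [Xproc]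

theorem Yproc_zero : Yproc ξ η ψ 0 = fun _ ↦ 0 := by
  ext ω; simp [Yproc]

theorem Xproc_succ_sub (j : ℕ) (ω : Ω) :
    Xproc ξ η ζ (j + 1) ω - Xproc ξ η ζ j ω = xiAlpha ξ η ζ (j + 1) ω := by
  rw [Xproc, Xproc, Finset.sum_Icc_succ_top (Nat.le_add_left 1 j), add_sub_cancel_left]

theorem Yproc_succ_sub (j : ℕ) (ω : Ω) :
    Yproc ξ η ψ (j + 1) ω - Yproc ξ η ψ j ω = xiBeta ξ η ψ (j + 1) ω := by
  rw [Yproc, Yproc, Finset.sum_Icc_succ_top (Nat.le_add_left 1 j), add_sub_cancel_left]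

theorem xi_succ_eq (m : ℕ) (ω : Ω) :
    ξ (m + 1) ω = if Qproc ξ η (m + 1) ω = 1
      then Xproc ξ η ζ (Tproc ξ η m ω + 1) ω - Xproc ξ η ζ (Tproc ξ η m ω) ω
      else Yproc ξ η ψ (m - Tproc ξ η m ω + 1) ω - Yproc ξ η ψ (m - Tproc ξ η m ω) ω := by
  have hT := Tproc_succ ξ η m ω
  have hTm := Tproc_le_self ξ η m ω
  split_ifs with hQ
  · have hlt : Tproc ξ η m ω < Tproc ξ η (m + 1) ω := by omega
    have hα : alphaProc ξ η (Tproc ξ η (m + 1) ω) ω = (m + 1 : ℕ) :=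
      firstHit_eq_succ_of_lt (monotone_Tproc ξ η ω) hlt
    rw [Xproc_succ_sub, show Tproc ξ η m ω + 1 = Tproc ξ η (m + 1) ω by omega, xiAlpha, hα,
      if_neg (ENat.natCast_ne_top _), ENat.toNat_natCast]
  · have hS : Sproc ξ η (m + 1) ω = m - Tproc ξ η m ω + 1 := by
      have := Qproc_le_one ξ η (m + 1) ω
      simp only [Sproc]
      omega
    have hlt : Sproc ξ η m ω < Sproc ξ η (m + 1) ω := by rw [hS]; simp [Sproc]
    have hβ : betaProc ξ η (Sproc ξ η (m + 1) ω) ω = (m + 1 : ℕ) :=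
      firstHit_eq_succ_of_lt (monotone_Sproc ξ η ω) hlt
    rw [Yproc_succ_sub, ← hS, xiBeta, hβ, if_neg (ENat.natCast_ne_top _), ENat.toNat_natCast]

theorem eta_eq_ite (hξv : ∀ n ω, ξ n ω = 1 ∨ ξ n ω = -1) (hηv : ∀ n ω, η n ω = 1 ∨ η n ω = -1)
    (k : ℕ) (ω : Ω) : η k ω = if Qproc ξ η k ω = 1 then ξ k ω else -ξ k ω := by
  unfold Qproc
  rcases hξv k ω with h₁ | h₁ <;> rcases hηv k ω with h₂ | h₂ <;> simp [h₁, h₂] <;> norm_num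

end Processes

section Measurability

variable {ξ η : ℕ → Ω → ℝ} (ζ ψ : ℕ → Ω → ℝ) [MeasurableSpace Ω]

theorem measurable_Tproc (hξ : ∀ k, 1 ≤ k → Measurable (ξ k))
    (hη : ∀ k, 1 ≤ k → Measurable (η k)) (k : ℕ) : Measurable (Tproc ξ η k) :=
  Finset.measurable_sum _ fun i hi ↦
    have hi₁ := (Finset.mem_Icc.mp hi).1
    Measurable.ite (measurableSet_eq_fun (hξ i hi₁) (hη i hi₁)) measurable_const measurable_const

theorem measurable_Xproc (hξ : ∀ k, 1 ≤ k → Measurable (ξ k))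
    (hη : ∀ k, 1 ≤ k → Measurable (η k)) (hζ : ∀ k, Measurable (ζ k)) (k : ℕ) :
    Measurable (Xproc ξ η ζ k) :=
  Finset.measurable_sum _ fun i _ ↦ measurable_ite_top_toNat
    (measurable_firstHit (fun j _ ↦ measurable_Tproc hξ hη j) i) (one_le_firstHit i) hξ (hζ i)

theorem measurable_Yproc (hξ : ∀ k, 1 ≤ k → Measurable (ξ k))
    (hη : ∀ k, 1 ≤ k → Measurable (η k)) (hψ : ∀ k, Measurable (ψ k)) (k : ℕ) :
    Measurable (Yproc ξ η ψ k) :=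
  Finset.measurable_sum _ fun i _ ↦ measurable_ite_top_toNat
    (measurable_firstHit (fun j _ ↦ measurable_const.sub (measurable_Tproc hξ hη j)) i)
    (one_le_firstHit i) hξ (hψ i)

end Measurability

section Filtrations

variable (ξ η ζ ψ : ℕ → Ω → ℝ)

theorem measurable_Tproc_Gfield {n k : ℕ} (hkn : k ≤ n) :
    Measurable[Gfield ξ η n] (Tproc ξ η k) := by
  rcases k.eq_zero_or_pos with rfl | hk
  · simp only [funext (Tproc_zero ξ η)]
    exact measurable_const
  · exact measurable_iff_comap_le.mpr (le_iSup₂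
      (f := fun k (_ : k ∈ Finset.Icc 1 n) ↦ MeasurableSpace.comap (Tproc ξ η k) _) k
      (Finset.mem_Icc.mpr ⟨hk, hkn⟩))

theorem measurable_Qproc_Gfield {n m : ℕ} (hmn : m + 1 ≤ n) :
    Measurable[Gfield ξ η n] (Qproc ξ η (m + 1)) := by
  have h : Qproc ξ η (m + 1) = fun ω ↦ Tproc ξ η (m + 1) ω - Tproc ξ η m ω := by
    ext ω; rw [Tproc_succ]; omega
  rw [h]
  exact (measurable_Tproc_Gfield ξ η hmn).sub (measurable_Tproc_Gfield ξ η (by omega))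

theorem Gfield_le_GfieldInf (n : ℕ) : Gfield ξ η n ≤ GfieldInf ξ η :=
  iSup₂_le fun k hk ↦ le_iSup₂ (f := fun k (_ : k ∈ {k : ℕ | 1 ≤ k}) ↦
    MeasurableSpace.comap (fun ω ↦ Tproc ξ η k ω) _) k (Finset.mem_Icc.mp hk).1

theorem Hfield_le (hξv : ∀ n ω, ξ n ω = 1 ∨ ξ n ω = -1) (hηv : ∀ n ω, η n ω = 1 ∨ η n ω = -1)
    (n : ℕ) :
    Hfield ξ η n ≤ processSigma (Xproc ξ η ζ) ⊔ processSigma (Yproc ξ η ψ) ⊔ Gfield ξ η n := by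
  set M := processSigma (Xproc ξ η ζ) ⊔ processSigma (Yproc ξ η ψ) ⊔ Gfield ξ η n
  have hX (j : ℕ) : Measurable[M] (Xproc ξ η ζ j) :=
    (measurable_processSigma_of_eq_const (Xproc_zero ξ η ζ) j).mono
      (le_sup_left.trans le_sup_left) le_rfl
  have hY (j : ℕ) : Measurable[M] (Yproc ξ η ψ j) :=
    (measurable_processSigma_of_eq_const (Yproc_zero ξ η ψ) j).mono
      (le_sup_right.trans le_sup_left) le_rfl
  have hQ {m : ℕ} (hmn : m + 1 ≤ n) : Measurable[M] (Qproc ξ η (m + 1)) :=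
    (measurable_Qproc_Gfield ξ η hmn).mono le_sup_right le_rfl
  have hξM {m : ℕ} (hmn : m + 1 ≤ n) : Measurable[M] (ξ (m + 1)) := by
    rw [funext (xi_succ_eq ξ η ζ ψ m)]
    exact measurable_of_countable_index
      (F := fun j ω ↦ if Qproc ξ η (m + 1) ω = 1 then Xproc ξ η ζ (j + 1) ω - Xproc ξ η ζ j ω
        else Yproc ξ η ψ (m - j + 1) ω - Yproc ξ η ψ (m - j) ω)
      (fun j ↦ Measurable.ite (hQ hmn (measurableSet_singleton 1)) ((hX _).sub (hX _))
        ((hY _).sub (hY _)))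
      ((measurable_Tproc_Gfield ξ η (by omega)).mono le_sup_right le_rfl)
  have hηM {m : ℕ} (hmn : m + 1 ≤ n) : Measurable[M] (η (m + 1)) := by
    rw [funext (eta_eq_ite ξ η hξv hηv (m + 1))]
    exact Measurable.ite (hQ hmn (measurableSet_singleton 1)) (hξM hmn) (hξM hmn).neg
  refine iSup₂_le fun k hk ↦ ?_
  obtain ⟨hk₁, hkn⟩ := Finset.mem_Icc.mp hk
  obtain ⟨m, rfl⟩ := Nat.exists_eq_add_of_le' hk₁
  exact sup_le (hξM hkn).comap_le (hηM hkn).comap_le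

end Filtrations

theorem stmt_14_general
    {Ω : Type*} [mΩ : MeasurableSpace Ω] (P : Measure Ω) [IsProbabilityMeasure P]
    (F : MeasureTheory.Filtration ℕ mΩ)
    (ξ η : ℕ → Ω → ℝ)
    (hξm : ∀ n, 1 ≤ n → Measurable[F n] (ξ n))
    (hηm : ∀ n, 1 ≤ n → Measurable[F n] (η n))
    (hξv : ∀ n ω, ξ n ω = 1 ∨ ξ n ω = -1)
    (hηv : ∀ n ω, η n ω = 1 ∨ η n ω = -1)
    (ζ ψ : ℕ → Ω → ℝ)
    (hζm : ∀ n, Measurable (ζ n)) (hψm : ∀ n, Measurable (ψ n))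
    (hXYT : iIndep
      ![⨆ n ∈ {n : ℕ | 1 ≤ n}, MeasurableSpace.comap (Xproc ξ η ζ n) inferInstance,
        ⨆ n ∈ {n : ℕ | 1 ≤ n}, MeasurableSpace.comap (Yproc ξ η ψ n) inferInstance,
        ⨆ n ∈ {n : ℕ | 1 ≤ n}, MeasurableSpace.comap (fun ω => Tproc ξ η n ω) inferInstance] P) :
    ∀ n : ℕ, 1 ≤ n → CondIndepGiven P (Gfield ξ η n) (Hfield ξ η n) (GfieldInf ξ η) := by
  intro n _
  have hξ (k : ℕ) (hk : 1 ≤ k) : Measurable (ξ k) := (hξm k hk).mono (F.le k) le_rfl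
  have hη (k : ℕ) (hk : 1 ≤ k) : Measurable (η k) := (hηm k hk).mono (F.le k) le_rfl
  have hX : processSigma (Xproc ξ η ζ) ≤ mΩ :=
    processSigma_le fun k _ ↦ measurable_Xproc ζ hξ hη hζm k
  have hY : processSigma (Yproc ξ η ψ) ≤ mΩ :=
    processSigma_le fun k _ ↦ measurable_Yproc ψ hξ hη hψm k
  have hT : GfieldInf ξ η ≤ mΩ := processSigma_le fun k _ ↦ measurable_Tproc hξ hη k
  have hindep :
      Indep (processSigma (Xproc ξ η ζ) ⊔ processSigma (Yproc ξ η ψ)) (GfieldInf ξ η) P :=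
    hXYT.indep_sup_of_fin_three hX hY hT
  exact (condIndepGiven_sup_of_indep (sup_le hX hY) hT (Gfield_le_GfieldInf ξ η n)
    hindep).mono_left (Hfield_le ξ η ζ ψ hξv hηv n)

theorem stmt_14
    {Ω : Type*} [mΩ : MeasurableSpace Ω] (P : Measure Ω) [IsProbabilityMeasure P]
    (F : MeasureTheory.Filtration ℕ mΩ) (hF0 : F 0 = ⊥)
    (ξ η : ℕ → Ω → ℝ)
    (hξm : ∀ n, 1 ≤ n → Measurable[F n] (ξ n))
    (hηm : ∀ n, 1 ≤ n → Measurable[F n] (η n))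
    (hξv : ∀ n ω, ξ n ω = 1 ∨ ξ n ω = -1)
    (hηv : ∀ n ω, η n ω = 1 ∨ η n ω = -1)
    (hhalf : ∀ n, 1 ≤ n →
      (P[({ω | ξ n ω = 1}).indicator (fun _ => (1 : ℝ)) | F (n - 1)] =ᵐ[P] fun _ => 1 / 2) ∧
      (P[({ω | ξ n ω = -1}).indicator (fun _ => (1 : ℝ)) | F (n - 1)] =ᵐ[P] fun _ => 1 / 2) ∧
      (P[({ω | η n ω = 1}).indicator (fun _ => (1 : ℝ)) | F (n - 1)] =ᵐ[P] fun _ => 1 / 2) ∧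
      (P[({ω | η n ω = -1}).indicator (fun _ => (1 : ℝ)) | F (n - 1)] =ᵐ[P] fun _ => 1 / 2))
    (ζ ψ : ℕ → Ω → ℝ)
    (hζm : ∀ n, Measurable (ζ n)) (hψm : ∀ n, Measurable (ψ n))
    (hζd : ∀ n, P {ω | ζ n ω = 1} = 2⁻¹ ∧ P {ω | ζ n ω = -1} = 2⁻¹)
    (hψd : ∀ n, P {ω | ψ n ω = 1} = 2⁻¹ ∧ P {ω | ψ n ω = -1} = 2⁻¹)
    (hindep : iIndep (fun i : ℕ ⊕ ℕ ⊕ Unit =>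
      Sum.elim (fun n => MeasurableSpace.comap (ζ n) inferInstance)
        (Sum.elim (fun n => MeasurableSpace.comap (ψ n) inferInstance)
          (fun _ => ⨆ n, (F n : MeasurableSpace Ω))) i) P)
    (hXYT : iIndep
      ![⨆ n ∈ {n : ℕ | 1 ≤ n}, MeasurableSpace.comap (Xproc ξ η ζ n) inferInstance,
        ⨆ n ∈ {n : ℕ | 1 ≤ n}, MeasurableSpace.comap (Yproc ξ η ψ n) inferInstance,
        ⨆ n ∈ {n : ℕ | 1 ≤ n}, MeasurableSpace.comap (fun ω => Tproc ξ η n ω) inferInstance] P) :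
    ∀ n : ℕ, 1 ≤ n → CondIndepGiven P (Gfield ξ η n) (Hfield ξ η n) (GfieldInf ξ η) :=
  stmt_14_general (mΩ := mΩ) P F ξ η hξm hηm hξv hηv ζ ψ hζm hψm hXYT
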